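/- arXiv:1703.02639 — 5 statements merged into one kernel-verified Lean document; each statement's English description precedes it below -/
import Mathlib

section
/- Let D₁ and D₂ be random variables, each taking values in the interval [0, d*] almost surely, with error CDFs F₁ and F₂. Suppose F₁(d) ≥ F₂(d) for every d ∈ [0, d*], and in addition there exist d₁ < d₂ in [0, d*] such that F₁(d) > F₂(d) for all d ∈ [d₁, d₂] (strict stochastic dominance). Then for every strictly increasing function g : [0, d*] → ℝ≥0 one has E[g(D₁)] < E[g(D₂)]. -/
/-
Push both errors forward to their laws `μ₁, μ₂` on `ℝ` and extend `g` from `[0, d*]` to a monotone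
`G` on `ℝ`, constant outside. Domination of the CDFs gives `μ₁ U ≤ μ₂ U` for every upper set `U`:
such a `U` is `Ioi c` or `Ici c`, whose masses are `1 - F c` and `1 - F (c⁻)`. Since `{G > s}` is an
upper set, the layer-cake formula `∫ G dμ = ∫₀^∞ μ {G > s} ds` yields `E[g(D₁)] ≤ E[g(D₂)]`.
For strictness, right-continuity of `F₂` gives `b > d₁` with `F₂ b < F₁ d₁`, and for every `s` in
the nondegenerate interval `(g d₁, g b)` one has `μ₁ {G > s} ≤ 1 - F₁ d₁ < 1 - F₂ b ≤ μ₂ {G > s}`.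
-/

open MeasureTheory Set ProbabilityTheory

theorem IsUpperSet.eq_empty_or_univ_or_Ioi_or_Ici {α : Type*} [ConditionallyCompleteLinearOrder α]
    {s : Set α} (hs : IsUpperSet s) :
    s = ∅ ∨ s = univ ∨ s = Ioi (sInf s) ∨ s = Ici (sInf s) := by
  rcases s.eq_empty_or_nonempty with rfl | hne
  · exact Or.inl rfl
  by_cases hbdd : BddBelow s
  swap
  · refine Or.inr (Or.inl (eq_univ_of_forall fun x => ?_))
    obtain ⟨y, hy, hyx⟩ := not_bddBelow_iff.1 hbdd x
    exact hs hyx.le hy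
  refine Or.inr (Or.inr ?_)
  by_cases hmem : sInf s ∈ s
  · refine Or.inr (Subset.antisymm (fun x hx => csInf_le hbdd hx) fun x hx => hs hx hmem)
  · refine Or.inl (Subset.antisymm (fun x hx => ?_) fun x hx => ?_)
    · exact (csInf_le hbdd hx).lt_of_ne (ne_of_mem_of_not_mem hx hmem).symm
    · obtain ⟨y, hy, hyx⟩ := exists_lt_of_csInf_lt hne hx
      exact hs hyx.le hy

theorem StieltjesFunction.exists_mem_Ioc_lt (f : StieltjesFunction ℝ) {x y c : ℝ} (hxy : x < y)
    (hfx : f x < c) : ∃ b ∈ Ioc x y, f b < c :=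
  (((f.right_continuous x).mono Ioi_subset_Ici_self).eventually_lt_const hfx
    |>.and (Ioc_mem_nhdsGT hxy)).exists.imp fun _ hb => ⟨hb.2, hb.1⟩

theorem cdf_map_eq_toReal {Ω : Type*} [MeasurableSpace Ω] (P : Measure Ω) [IsProbabilityMeasure P]
    {X : Ω → ℝ} (hX : Measurable X) (x : ℝ) :
    cdf (P.map X) x = (P {ω | X ω ≤ x}).toReal := by
  have := Measure.isProbabilityMeasure_map (μ := P) hX.aemeasurable
  rw [cdf_eq_real, measureReal_def, Measure.map_apply hX measurableSet_Iic]
  rfl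

section

variable {μ ν : Measure ℝ} [IsProbabilityMeasure μ] [IsProbabilityMeasure ν]

theorem cdf_le_of_le_on_Icc {a b : ℝ} (hμ : ∀ᵐ x ∂μ, x ∈ Icc a b) (hν : ∀ᵐ x ∂ν, x ∈ Icc a b)
    (h : ∀ x ∈ Icc a b, cdf ν x ≤ cdf μ x) (x : ℝ) : cdf ν x ≤ cdf μ x := by
  rcases lt_or_ge x a with hxa | hax
  · have : ν (Iic x) = 0 := measure_eq_zero_iff_ae_notMem.2 <|
      hν.mono fun y hy hyx => (lt_of_le_of_lt hy.1 (lt_of_le_of_lt hyx hxa)).false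
    rw [cdf_eq_real, measureReal_def, this]
    exact cdf_nonneg μ x
  rcases le_or_gt x b with hxb | hbx
  · exact h x ⟨hax, hxb⟩
  · have : μ (Iic x) = 1 := by
      rw [← prob_compl_eq_zero_iff measurableSet_Iic, compl_Iic]
      exact measure_eq_zero_iff_ae_notMem.2 <|
        hμ.mono fun y hy hxy => (lt_of_le_of_lt hy.2 (lt_trans hbx hxy)).false
    rw [cdf_eq_real μ, measureReal_def, this]
    exact cdf_le_one ν x

theorem measure_le_of_isUpperSet (h : ∀ x, cdf ν x ≤ cdf μ x) {U : Set ℝ} (hU : IsUpperSet U) :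
    μ U ≤ ν U := by
  rcases hU.eq_empty_or_univ_or_Ioi_or_Ici with hU | hU | hU | hU <;> rw [hU]
  · simp
  · simp
  · rw [← measure_cdf μ, ← measure_cdf ν, (cdf μ).measure_Ioi (tendsto_cdf_atTop μ),
      (cdf ν).measure_Ioi (tendsto_cdf_atTop ν)]
    gcongr
    exact h _
  · rw [← measure_cdf μ, ← measure_cdf ν, (cdf μ).measure_Ici (tendsto_cdf_atTop μ),
      (cdf ν).measure_Ici (tendsto_cdf_atTop ν)]
    gcongr
    exact le_of_tendsto_of_tendsto' ((monotone_cdf ν).tendsto_leftLim _)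
      ((monotone_cdf μ).tendsto_leftLim _) h

theorem lintegral_lt_lintegral_of_cdf_le {G : ℝ → ℝ} (hG : Monotone G) (hG0 : ∀ x, 0 ≤ G x)
    (hle : ∀ x, cdf ν x ≤ cdf μ x) {a b : ℝ} (hGab : G a < G b) (hlt : cdf ν b < cdf μ a)
    (hfin : ∫⁻ x, ENNReal.ofReal (G x) ∂ν ≠ ⊤) :
    ∫⁻ x, ENNReal.ofReal (G x) ∂μ < ∫⁻ x, ENNReal.ofReal (G x) ∂ν := by
  have htail : ∀ s, μ {x | s < G x} ≤ ν {x | s < G x} := fun s =>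
    measure_le_of_isUpperSet hle fun x y hxy hx => hx.trans_le (hG hxy)
  have htail_lt : ∀ s ∈ Ioo (G a) (G b), μ {x | s < G x} < ν {x | s < G x} := by
    intro s hs
    calc μ {x | s < G x} ≤ μ (Ioi a) :=
          measure_mono fun x hx => lt_of_not_ge fun hxa => ((hG hxa).trans hs.1.le).not_gt hx
      _ < ν (Ioi b) := by
          rw [← measure_cdf μ, ← measure_cdf ν, (cdf μ).measure_Ioi (tendsto_cdf_atTop μ),
            (cdf ν).measure_Ioi (tendsto_cdf_atTop ν),
            ENNReal.ofReal_lt_ofReal_iff (by linarith [cdf_le_one μ a])]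
          linarith
      _ ≤ ν {x | s < G x} := measure_mono fun x hx => hs.2.trans_le (hG (le_of_lt hx))
  rw [lintegral_eq_lintegral_meas_lt μ (ae_of_all _ hG0) hG.measurable.aemeasurable,
    lintegral_eq_lintegral_meas_lt ν (ae_of_all _ hG0) hG.measurable.aemeasurable] at *
  refine lintegral_strict_mono_of_ae_le_of_ae_lt_on
    (Antitone.measurable (f := fun s => ν {x | s < G x})
      fun s t hst => measure_mono fun x hx => hst.trans_lt hx).aemeasurable
    ((lintegral_mono htail).trans_lt hfin.lt_top).ne (ae_of_all _ htail)
    (s := Ioo (G a) (G b)) ?_ (ae_of_all _ htail_lt)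
  rw [Measure.restrict_apply measurableSet_Ioo,
    inter_eq_left.2 (Ioo_subset_Ioi_self.trans (Ioi_subset_Ioi (hG0 a))),
    Real.volume_Ioo]
  exact (ENNReal.ofReal_pos.2 (sub_pos.2 hGab)).ne'

theorem integral_lt_integral_of_cdf_le {G : ℝ → ℝ} (hG : Monotone G) (hG0 : ∀ x, 0 ≤ G x)
    (hle : ∀ x, cdf ν x ≤ cdf μ x) {a b : ℝ} (hGab : G a < G b) (hlt : cdf ν b < cdf μ a)
    (hGν : Integrable G ν) : ∫ x, G x ∂μ < ∫ x, G x ∂ν := by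
  have hlint := lintegral_lt_lintegral_of_cdf_le hG hG0 hle hGab hlt
    hGν.lintegral_lt_top.ne
  rw [integral_eq_lintegral_of_nonneg_ae (ae_of_all _ hG0) hG.measurable.aestronglyMeasurable,
    integral_eq_lintegral_of_nonneg_ae (ae_of_all _ hG0) hG.measurable.aestronglyMeasurable]
  exact (ENNReal.toReal_lt_toReal hlint.ne_top hGν.lintegral_lt_top.ne).2 hlint

end

/-- Theorem 2 (second part): if algorithm 1 *strictly* stochastically dominates
algorithm 2 (its error CDF dominates pointwise on `[0, d*]` and is strictly
larger on some subinterval `[d₁, d₂]` with `d₁ < d₂`), then the expected cost of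
algorithm 1 is strictly smaller than that of algorithm 2, for every strictly
increasing nonnegative distance-based cost function `g`. -/
theorem strict_stochastic_dominance_expected_cost
    {Ω : Type*} [MeasureSpace Ω] [IsProbabilityMeasure (volume : Measure Ω)]
    (dstar : ℝ) (hdstar : 0 < dstar)
    (D₁ D₂ : Ω → ℝ) (hD₁ : Measurable D₁) (hD₂ : Measurable D₂)
    (hD₁s : ∀ᵐ ω, D₁ ω ∈ Icc 0 dstar) (hD₂s : ∀ᵐ ω, D₂ ω ∈ Icc 0 dstar)
    (hdom : ∀ d ∈ Icc (0:ℝ) dstar,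
      (volume {ω | D₂ ω ≤ d}).toReal ≤ (volume {ω | D₁ ω ≤ d}).toReal)
    (hstrict : ∃ d₁ ∈ Icc (0:ℝ) dstar, ∃ d₂ ∈ Icc (0:ℝ) dstar, d₁ < d₂ ∧
      ∀ d ∈ Icc d₁ d₂,
        (volume {ω | D₂ ω ≤ d}).toReal < (volume {ω | D₁ ω ≤ d}).toReal)
    (g : ℝ → ℝ) (hg : StrictMonoOn g (Icc 0 dstar))
    (hg0 : ∀ x ∈ Icc (0:ℝ) dstar, 0 ≤ g x) :
    (∫ ω, g (D₁ ω)) < ∫ ω, g (D₂ ω) := by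
  obtain ⟨d₁, hd₁, d₂, hd₂, h₁₂, hstrict⟩ := hstrict
  set G : ℝ → ℝ := IccExtend hdstar.le fun x => g x
  have hG_eq : ∀ x ∈ Icc 0 dstar, G x = g x := fun x hx => IccExtend_of_mem _ _ hx
  have hG_mono : Monotone G := (monotoneOn_iff_monotone.1 hg.monotoneOn).IccExtend hdstar.le
  have hG_nonneg : ∀ x, 0 ≤ G x := fun x => hg0 _ (projIcc 0 dstar hdstar.le x).2
  have integral_eq : ∀ D : Ω → ℝ, Measurable D → (∀ᵐ ω, D ω ∈ Icc 0 dstar) →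
      ∫ ω, g (D ω) = ∫ x, G x ∂(volume.map D) := fun D hD hDs => by
    rw [integral_map hD.aemeasurable hG_mono.measurable.aestronglyMeasurable]
    exact integral_congr_ae (hDs.mono fun ω hω => (hG_eq _ hω).symm)
  have := Measure.isProbabilityMeasure_map (μ := (volume : Measure Ω)) hD₁.aemeasurable
  have := Measure.isProbabilityMeasure_map (μ := (volume : Measure Ω)) hD₂.aemeasurable
  have hsupp₁ := (ae_map_iff hD₁.aemeasurable measurableSet_Icc).2 hD₁s
  have hsupp₂ := (ae_map_iff hD₂.aemeasurable measurableSet_Icc).2 hD₂s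
  have hcdf : ∀ x, cdf (volume.map D₂) x ≤ cdf (volume.map D₁) x :=
    cdf_le_of_le_on_Icc hsupp₁ hsupp₂
      (by simpa only [cdf_map_eq_toReal _ hD₁, cdf_map_eq_toReal _ hD₂] using hdom)
  have hgap := hstrict d₁ ⟨le_rfl, h₁₂.le⟩
  rw [← cdf_map_eq_toReal _ hD₁, ← cdf_map_eq_toReal _ hD₂] at hgap
  obtain ⟨b, hb_mem, hb_lt⟩ := (cdf _).exists_mem_Ioc_lt h₁₂ hgap
  have hb : b ∈ Icc 0 dstar := ⟨hd₁.1.trans hb_mem.1.le, hb_mem.2.trans hd₂.2⟩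
  rw [integral_eq D₁ hD₁ hD₁s, integral_eq D₂ hD₂ hD₂s]
  refine integral_lt_integral_of_cdf_le hG_mono hG_nonneg hcdf (a := d₁) (b := b) ?_ hb_lt ?_
  · rw [hG_eq _ hd₁, hG_eq _ hb]
    exact hg hd₁ hb hb_mem.1
  · exact Integrable.of_mem_Icc (G 0) (G dstar) hG_mono.measurable.aemeasurable
      (hsupp₂.mono fun x hx => ⟨hG_mono hx.1, hG_mono hx.2⟩)
end

section
/- Let D₁ and D₂ be random variables, each taking values in the interval [0, d*] almost surely, with error CDFs F₁ and F₂. Suppose neither stochastically dominates the other, i.e., there exists d₁ ∈ [0, d*] with F₁(d₁) > F₂(d₁) and there exists d₂ ∈ [0, d*] with F₂(d₂) > F₁(d₂). Then there exist monotonically increasing functions g₁, g₂ : [0, d*] → ℝ≥0 such that E[g₁(D₁)] < E[g₁(D₂)] and E[g₂(D₂)] < E[g₂(D₁)]. -/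
open MeasureTheory Set

lemma step_integral {Ω : Type*} [MeasureSpace Ω]
    [IsProbabilityMeasure (volume : Measure Ω)]
    (D : Ω → ℝ) (hD : Measurable D) (d : ℝ) :
    (∫ ω, (if D ω ≤ d then (0:ℝ) else 1)) =
      1 - (volume {ω | D ω ≤ d}).toReal := by
  have hs : MeasurableSet {ω | D ω ≤ d} := hD measurableSet_Iic
  have heq : (fun ω => (if D ω ≤ d then (0:ℝ) else 1)) =
      Set.indicator {ω | D ω ≤ d}ᶜ (fun _ => (1:ℝ)) := by
    funext ω
    by_cases h : D ω ≤ d <;> simp [Set.indicator, h]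
  rw [heq, integral_indicator_const _ hs.compl]
  rw [measureReal_def, measure_compl hs (measure_ne_top _ _), measure_univ]
  have hle : volume {ω | D ω ≤ d} ≤ 1 := prob_le_one
  rw [ENNReal.toReal_sub_of_le hle ENNReal.one_ne_top]
  simp

lemma step_mono (d : ℝ) : Monotone (fun x : ℝ => if x ≤ d then (0:ℝ) else 1) := by
  intro x y hxy
  by_cases hy : y ≤ d
  · simp [le_trans hxy hy, hy]
  · by_cases hx : x ≤ d <;> simp [hx, hy]

/-- Theorem 4: if neither of two localization algorithms stochastically
dominates the other, then there exist monotonically increasing nonnegative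
distance-based cost functions `g₁`, `g₂` such that algorithm 1 is strictly
better for `g₁` and algorithm 2 is strictly better for `g₂`. -/
theorem no_dominance_incomparable
    {Ω : Type*} [MeasureSpace Ω] [IsProbabilityMeasure (volume : Measure Ω)]
    (dstar : ℝ) (hdstar : 0 < dstar)
    (D₁ D₂ : Ω → ℝ) (hD₁ : Measurable D₁) (hD₂ : Measurable D₂)
    (hD₁s : ∀ᵐ ω, D₁ ω ∈ Icc 0 dstar) (hD₂s : ∀ᵐ ω, D₂ ω ∈ Icc 0 dstar)
    (h₁ : ∃ d₁ ∈ Icc (0:ℝ) dstar,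
      (volume {ω | D₂ ω ≤ d₁}).toReal < (volume {ω | D₁ ω ≤ d₁}).toReal)
    (h₂ : ∃ d₂ ∈ Icc (0:ℝ) dstar,
      (volume {ω | D₁ ω ≤ d₂}).toReal < (volume {ω | D₂ ω ≤ d₂}).toReal) :
    ∃ g₁ g₂ : ℝ → ℝ,
      MonotoneOn g₁ (Icc 0 dstar) ∧ (∀ x ∈ Icc (0:ℝ) dstar, 0 ≤ g₁ x) ∧
      MonotoneOn g₂ (Icc 0 dstar) ∧ (∀ x ∈ Icc (0:ℝ) dstar, 0 ≤ g₂ x) ∧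
      (∫ ω, g₁ (D₁ ω)) < (∫ ω, g₁ (D₂ ω)) ∧
      (∫ ω, g₂ (D₂ ω)) < (∫ ω, g₂ (D₁ ω)) := by
  obtain ⟨d₁, hd₁, hF₁⟩ := h₁
  obtain ⟨d₂, hd₂, hF₂⟩ := h₂
  refine ⟨fun x => if x ≤ d₁ then 0 else 1, fun x => if x ≤ d₂ then 0 else 1,
    (step_mono d₁).monotoneOn _, ?_, (step_mono d₂).monotoneOn _, ?_, ?_, ?_⟩
  · intro x _; dsimp only; split <;> norm_num
  · intro x _; dsimp only; split <;> norm_num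
  · rw [step_integral D₁ hD₁ d₁, step_integral D₂ hD₂ d₁]; linarith
  · rw [step_integral D₁ hD₁ d₂, step_integral D₂ hD₂ d₂]; linarith
end

section
/- Let ι be a nonempty index set and let (D_i)_{i ∈ ι} be a family of random variables, each taking values in [0, d*] almost surely, with error CDFs F_i(d) = P(D_i ≤ d). Define the upper envelope F*(d) = sup_{i ∈ ι} F_i(d) for d ∈ [0, d*]. Suppose there exists i₀ ∈ ι with F_{i₀}(d) = F*(d) for all d ∈ [0, d*] (the upper envelope is attainable), and suppose i₁ ∈ ι minimizes the expected distance error, i.e., E[D_{i₁}] ≤ E[D_i] for all i ∈ ι. Then F_{i₁}(d) = F*(d) for Lebesgue-almost every d ∈ [0, d*]; in other words, if the upper envelope of error CDFs is attainable by any algorithm in the family, then it is attained (almost everywhere) by the MEDE algorithm. -/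
open MeasureTheory Set

/-- If the upper envelope `F*` of the error CDFs of a family of algorithms is
attained by some algorithm `i₀` of the family, then the algorithm `i₁`
minimizing the expected distance error (MEDE) also attains `F*`, for
Lebesgue-almost every distance `d ∈ [0, d*]`. -/
theorem upper_envelope_attained_by_MEDE
    {Ω : Type*} [MeasureSpace Ω] [IsProbabilityMeasure (volume : Measure Ω)]
    (dstar : ℝ) (hdstar : 0 < dstar)
    {ι : Type*} [Nonempty ι]
    (D : ι → Ω → ℝ) (hD : ∀ i, Measurable (D i))
    (hDs : ∀ i, ∀ᵐ ω, D i ω ∈ Icc 0 dstar)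
    (i₀ : ι)
    (h₀ : ∀ d ∈ Icc (0:ℝ) dstar,
      (volume {ω | D i₀ ω ≤ d}).toReal = ⨆ i, (volume {ω | D i ω ≤ d}).toReal)
    (i₁ : ι) (h₁ : ∀ i, (∫ ω, D i₁ ω) ≤ ∫ ω, D i ω) :
    ∀ᵐ d ∂(volume.restrict (Icc (0:ℝ) dstar)),
      (volume {ω | D i₁ ω ≤ d}).toReal
        = ⨆ i, (volume {ω | D i ω ≤ d}).toReal := by
  set g : ι → ℝ → ℝ := fun i d => (volume {ω | D i ω ≤ d}).toReal with hg
  -- basic facts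
  have hfin : ∀ i d, volume {ω | D i ω ≤ d} ≠ ⊤ := fun i d => measure_ne_top _ _
  have hle1 : ∀ i d, g i d ≤ 1 := by
    intro i d
    have := prob_le_one (μ := (volume : Measure Ω)) (s := {ω | D i ω ≤ d})
    simpa [hg] using ENNReal.toReal_le_of_le_ofReal zero_le_one (by simpa using this)
  have hgnn : ∀ i d, 0 ≤ g i d := fun i d => ENNReal.toReal_nonneg
  have hgm : ∀ i, Monotone (g i) := by
    intro i a b hab
    exact ENNReal.toReal_mono (hfin i b)
      (measure_mono fun ω h => le_trans h hab)
  -- integrability of D i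
  have hint : ∀ i, Integrable (D i) := by
    intro i
    refine ⟨(hD i).aestronglyMeasurable, ?_⟩
    apply HasFiniteIntegral.of_bounded (C := dstar)
    filter_upwards [hDs i] with ω hω
    rw [Real.norm_eq_abs, abs_of_nonneg hω.1]; exact hω.2
  -- layer cake: ∫ D i = ∫ t in Ioc 0 dstar, (1 - g i t)
  have key : ∀ i, (∫ ω, D i ω) = ∫ t in Ioc (0:ℝ) dstar, (1 - g i t) := by
    intro i
    have hnn : 0 ≤ᵐ[volume] D i := by
      filter_upwards [hDs i] with ω hω using hω.1
    rw [(hint i).integral_eq_integral_meas_lt hnn]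
    rw [setIntegral_eq_of_subset_of_ae_diff_eq_zero
        nullMeasurableSet_Ioi Ioc_subset_Ioi_self ?_]
    · apply setIntegral_congr_fun measurableSet_Ioc
      intro t _
      show (volume {a : Ω | t < D i a}).toReal = 1 - g i t
      have hc : {a : Ω | t < D i a} = {ω | D i ω ≤ t}ᶜ := by
        ext ω; simp [not_le]
      rw [hc, measure_compl (measurableSet_le (hD i) measurable_const) (hfin i t),
        measure_univ]
      rw [ENNReal.toReal_sub_of_le (prob_le_one) (by simp)]
      simp [hg]
    · apply Filter.Eventually.of_forall (fun t ht => ?_)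
      have htM : dstar < t := by
        simp only [mem_diff, mem_Ioi, mem_Ioc, not_and, not_le] at ht
        exact ht.2 ht.1
      have obs : volume {a : Ω | dstar < D i a} = 0 := by
        rw [measure_eq_zero_iff_ae_notMem]
        filter_upwards [hDs i] with a ha using not_lt.mpr ha.2
      have : volume {a : Ω | t < D i a} = 0 :=
        measure_mono_null (fun a ha => lt_trans htM ha) obs
      show (volume {a : Ω | t < D i a}).toReal = 0
      simp [this]
  -- integrability of g i on Ioc
  have hgint : ∀ i, IntegrableOn (g i) (Ioc (0:ℝ) dstar) := by
    intro i
    refine ⟨((hgm i).measurable).aestronglyMeasurable, ?_⟩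
    apply HasFiniteIntegral.of_bounded (C := (1:ℝ))
    filter_upwards with t
    rw [Real.norm_eq_abs, abs_of_nonneg (hgnn i t)]; exact hle1 i t
  have h1gint : ∀ i, IntegrableOn (fun t => 1 - g i t) (Ioc (0:ℝ) dstar) := by
    intro i
    exact (integrable_const 1).sub (hgint i)
  -- main inequality
  have hdiff : ∫ t in Ioc (0:ℝ) dstar, (g i₀ t - g i₁ t) ≤ 0 := by
    have : ∫ t in Ioc (0:ℝ) dstar, (g i₀ t - g i₁ t)
        = (∫ ω, D i₁ ω) - (∫ ω, D i₀ ω) := by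
      rw [key, key, ← integral_sub (h1gint i₁) (h1gint i₀)]
      apply integral_congr_ae
      filter_upwards with t
      ring
    rw [this]
    linarith [h₁ i₀]
  -- nonnegativity of integrand on Ioc
  have hsup : ∀ d ∈ Icc (0:ℝ) dstar, g i₁ d ≤ g i₀ d := by
    intro d hd
    simp only [hg]
    rw [h₀ d hd]
    refine le_ciSup (f := fun i => (volume {ω | D i ω ≤ d}).toReal)
      ⟨1, ?_⟩ i₁
    rintro _ ⟨i, rfl⟩
    exact hle1 i d
  have hnnae : 0 ≤ᵐ[volume.restrict (Ioc (0:ℝ) dstar)]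
      fun t => g i₀ t - g i₁ t := by
    filter_upwards [ae_restrict_mem measurableSet_Ioc] with t ht
    have := hsup t (Ioc_subset_Icc_self ht)
    simp only [Pi.zero_apply]; linarith
  have hzero : (fun t => g i₀ t - g i₁ t)
      =ᵐ[volume.restrict (Ioc (0:ℝ) dstar)] 0 := by
    rw [← integral_eq_zero_iff_of_nonneg_ae hnnae ((hgint i₀).sub (hgint i₁))]
    exact le_antisymm hdiff (integral_nonneg_of_ae hnnae)
  -- conclude
  rw [← Measure.restrict_congr_set Ioc_ae_eq_Icc]
  filter_upwards [hzero, ae_restrict_mem measurableSet_Ioc] with d hz hd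
  have hd' : d ∈ Icc (0:ℝ) dstar := Ioc_subset_Icc_self hd
  rw [← h₀ d hd']
  have : g i₀ d - g i₁ d = 0 := hz
  simp only [hg] at this ⊢
  linarith
end

section
/- Let S be the closed disc of radius R > 0 centered at the origin in the Euclidean plane ℝ², and let f : ℝ² → ℝ be given by f(x) = φ(‖x‖) where φ : [0, ∞) → [0, ∞) is antitone (non-increasing), so that f is a radially symmetric unimodal density on S with mode at the center. Then for every d > 0 and every y ∈ S, ∫_{B̄(0,d) ∩ S} f(x) dx ≥ ∫_{B̄(y,d) ∩ S} f(x) dx, where B̄(z,d) denotes the closed Euclidean ball of radius d about z; that is, the center of the disc (the MAP estimate) is simultaneously an MP(d) estimate for every radius d. -/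
/-!
Put `ρ = min d R`, so the centred region is the ball `A = closedBall 0 ρ`, and let `B` be the
off-centre region. `B` has no more Lebesgue measure than `A`, since it lies both in a translate
of the ball of radius `d` and in the disc of radius `R`. The density is at least `φ ρ` on
`A \ B` and at most `φ ρ` on `B \ A`, so comparing both differences with the level `φ ρ ≥ 0`
shows that `A` carries at least as much mass as `B`.
-/

open MeasureTheory Metric Set

theorem setIntegral_le_setIntegral_of_threshold {α : Type*} [MeasurableSpace α] {μ : Measure α}
    {f : α → ℝ} {s t : Set α} {c : ℝ} (hs : MeasurableSet s) (ht : MeasurableSet t)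
    (hfs : IntegrableOn f s μ) (hft : IntegrableOn f t μ) (hst : μ s ≤ μ t)
    (ht_fin : μ t ≠ ⊤)
    (hc : 0 ≤ c) (h_le : ∀ x ∈ s \ t, f x ≤ c) (h_ge : ∀ x ∈ t \ s, c ≤ f x) :
    ∫ x in s, f x ∂μ ≤ ∫ x in t, f x ∂μ := by
  have hs_fin : μ s ≠ ⊤ := ne_top_of_le_ne_top ht_fin hst
  have h_diff : μ (s \ t) ≤ μ (t \ s) := by
    have hst' : μ (s ∩ t) + μ (s \ t) ≤ μ (s ∩ t) + μ (t \ s) := by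
      rw [measure_inter_add_sdiff s ht, inter_comm, measure_inter_add_sdiff t hs]
      exact hst
    exact (ENNReal.add_le_add_iff_left
      (measure_ne_top_of_subset inter_subset_left hs_fin)).1 hst'
  have hts_fin : μ (t \ s) ≠ ⊤ := measure_ne_top_of_subset sdiff_subset ht_fin
  rw [← integral_inter_add_sdiff ht hfs, ← integral_inter_add_sdiff hs hft, inter_comm s t]
  refine add_le_add_right ?_ _
  have hst_fin : μ (s \ t) ≠ ⊤ := measure_ne_top_of_subset sdiff_subset hs_fin
  calc ∫ x in s \ t, f x ∂μ
      ≤ ∫ _ in s \ t, c ∂μ :=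
        setIntegral_mono_on (hfs.mono_set sdiff_subset) (integrableOn_const hst_fin)
          (hs.diff ht) h_le
    _ = μ.real (s \ t) * c := by rw [setIntegral_const, smul_eq_mul]
    _ ≤ μ.real (t \ s) * c := mul_le_mul_of_nonneg_right (ENNReal.toReal_mono hts_fin h_diff) hc
    _ = ∫ _ in t \ s, c ∂μ := by rw [setIntegral_const, smul_eq_mul]
    _ ≤ ∫ x in t \ s, f x ∂μ :=
        setIntegral_mono_on (integrableOn_const hts_fin) (hft.mono_set sdiff_subset)
          (ht.diff hs) h_ge

section Radial

variable {E : Type*} [SeminormedAddGroup E] [MeasurableSpace E] [OpensMeasurableSpace E]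
  {φ : ℝ → ℝ}

theorem AntitoneOn.measurable_comp_norm (hφ : AntitoneOn φ (Ici 0)) :
    Measurable fun x : E => φ ‖x‖ := by
  have h_ext : Antitone fun t : ℝ => φ (max t 0) := fun a b hab =>
    hφ (mem_Ici.2 (le_max_right _ _)) (mem_Ici.2 (le_max_right _ _)) (max_le_max hab le_rfl)
  simpa only [Function.comp_def, norm_nonneg, sup_of_le_left] using
    h_ext.measurable.comp (continuous_norm (E := E)).measurable

theorem AntitoneOn.integrableOn_comp_norm {μ : Measure E} {s : Set E}
    (hφ : AntitoneOn φ (Ici 0)) (hφ0 : ∀ t ∈ Ici (0 : ℝ), 0 ≤ φ t) (hs : μ s ≠ ⊤) :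
    IntegrableOn (fun x : E => φ ‖x‖) s μ :=
  Measure.integrableOn_of_bounded hs hφ.measurable_comp_norm.aestronglyMeasurable
    (Filter.Eventually.of_forall fun x => by
      rw [Real.norm_of_nonneg (hφ0 _ (norm_nonneg x))]
      exact hφ self_mem_Ici (norm_nonneg x) (norm_nonneg x))

theorem setIntegral_comp_norm_le_setIntegral_closedBall [ProperSpace E] {μ : Measure E}
    [IsFiniteMeasureOnCompacts μ] {s : Set E} {r : ℝ} (hφ : AntitoneOn φ (Ici 0))
    (hφ0 : ∀ t ∈ Ici (0 : ℝ), 0 ≤ φ t) (hr : 0 ≤ r) (hs : MeasurableSet s)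
    (hμs : μ s ≤ μ (closedBall 0 r)) :
    ∫ x in s, φ ‖x‖ ∂μ ≤ ∫ x in closedBall 0 r, φ ‖x‖ ∂μ := by
  have h_ball_fin : μ (closedBall (0 : E) r) ≠ ⊤ := measure_closedBall_lt_top.ne
  refine setIntegral_le_setIntegral_of_threshold hs measurableSet_closedBall
    (hφ.integrableOn_comp_norm hφ0 (ne_top_of_le_ne_top h_ball_fin hμs))
    (hφ.integrableOn_comp_norm hφ0 h_ball_fin) hμs h_ball_fin (hφ0 r hr) ?_ ?_
  · rintro x ⟨-, hx⟩
    rw [mem_closedBall_zero_iff, not_le] at hx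
    exact hφ hr (hr.trans hx.le) hx.le
  · rintro x ⟨hx, -⟩
    rw [mem_closedBall_zero_iff] at hx
    exact hφ (norm_nonneg x) hr hx

end Radial

theorem measure_closedBall_inter_closedBall_le {E : Type*} [NormedAddCommGroup E]
    [MeasurableSpace E] [BorelSpace E] (μ : Measure E) [μ.IsAddHaarMeasure] (x y : E)
    (a b : ℝ) :
    μ (closedBall x a ∩ closedBall y b) ≤ μ (closedBall 0 (min a b)) := by
  rcases min_cases a b with ⟨h, -⟩ | ⟨h, -⟩ <;>
    rw [h, ← Measure.addHaar_closedBall_center μ]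
  · exact measure_mono inter_subset_left
  · exact measure_mono inter_subset_right

theorem disc_center_is_MPd_for_all_radii_general
    (R : ℝ)
    (φ : ℝ → ℝ) (hφ : AntitoneOn φ (Ici 0)) (hφ0 : ∀ x ∈ Ici (0:ℝ), 0 ≤ φ x)
    (f : EuclideanSpace ℝ (Fin 2) → ℝ) (hf : ∀ x, f x = φ ‖x‖) :
    ∀ d : ℝ, 0 < d →
      ∀ y ∈ closedBall (0 : EuclideanSpace ℝ (Fin 2)) R,
        (∫ x in closedBall y d ∩ closedBall (0 : EuclideanSpace ℝ (Fin 2)) R, f x)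
          ≤ ∫ x in closedBall (0 : EuclideanSpace ℝ (Fin 2)) d ∩
              closedBall (0 : EuclideanSpace ℝ (Fin 2)) R, f x := by
  intro d hd y hy
  obtain rfl : f = fun x => φ ‖x‖ := funext hf
  have hR : 0 ≤ R := nonempty_closedBall.1 ⟨y, hy⟩
  have h_inter : closedBall (0 : EuclideanSpace ℝ (Fin 2)) d ∩ closedBall 0 R =
      closedBall 0 (min d R) := by
    ext x
    simp only [mem_inter_iff, mem_closedBall, le_min_iff]
  rw [h_inter]
  exact setIntegral_comp_norm_le_setIntegral_closedBall hφ hφ0 (le_min hd.le hR)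
    (measurableSet_closedBall.inter measurableSet_closedBall)
    (measure_closedBall_inter_closedBall_le volume y 0 d R)

/-- On the closed disc `S` of radius `R` centered at the origin, for a radially
symmetric unimodal density `f x = φ ‖x‖` with `φ` non-increasing and
nonnegative on `[0, ∞)`, the center of the disc (the MAP estimate) captures at
least as much probability mass within every radius `d` as any other point
`y ∈ S`: the center is simultaneously an MP(d) estimate for every `d`. -/
theorem disc_center_is_MPd_for_all_radii
    (R : ℝ) (hR : 0 < R)
    (φ : ℝ → ℝ) (hφ : AntitoneOn φ (Ici 0)) (hφ0 : ∀ x ∈ Ici (0:ℝ), 0 ≤ φ x)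
    (f : EuclideanSpace ℝ (Fin 2) → ℝ) (hf : ∀ x, f x = φ ‖x‖) :
    ∀ d : ℝ, 0 < d →
      ∀ y ∈ closedBall (0 : EuclideanSpace ℝ (Fin 2)) R,
        (∫ x in closedBall y d ∩ closedBall (0 : EuclideanSpace ℝ (Fin 2)) R, f x)
          ≤ ∫ x in closedBall (0 : EuclideanSpace ℝ (Fin 2)) d ∩
              closedBall (0 : EuclideanSpace ℝ (Fin 2)) R, f x :=
  disc_center_is_MPd_for_all_radii_general R φ hφ hφ0 f hf
end

section
/- Let f : ℝ → ℝ be the probability density defined by f(x) = (4/5)(1 + x) for −1 ≤ x < 0, f(x) = (4/5)(1 − x/2) for 0 ≤ x ≤ 1, and f(x) = 0 otherwise. For 0 < d ≤ 3/2 define, for each candidate estimate x̂ ∈ ℝ, the captured probability P(x̂, d) = ∫_{x̂ − d/2}^{x̂ + d/2} f(x) dx. Then the point x̂ = d/6 maximizes P(·, d) over ℝ; i.e., the MP(d) estimate for this posterior density is d/6 for all 0 < d ≤ 3/2, and in particular the MP(d) estimate converges to the MAP estimate x = 0 as d → 0. -/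
/-! The window `(-d/3, 2d/3]` of length `d` is the superlevel set `{f ≥ c}` with
`c = (4/5)(1 - d/3)`. Subtracting `c` from `f` does not change the comparison between windows
of equal length, and after that subtraction the part of any other window outside `(-d/3, 2d/3]`
contributes `≤ 0`, while the part of `(-d/3, 2d/3]` it misses contributes `≥ 0`. -/

open MeasureTheory Set Filter

/-- The asymmetric unimodal posterior density of the example in Fig. 2. -/
noncomputable def examplePdf : ℝ → ℝ := fun x =>
  if -1 ≤ x ∧ x < 0 then (4/5) * (1 + x)
  else if 0 ≤ x ∧ x ≤ 1 then (4/5) * (1 - x/2)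
  else 0

theorem setIntegral_le_setIntegral_of_nonpos_sdiff_of_nonneg_sdiff {α : Type*}
    [MeasurableSpace α] {μ : Measure α} {g : α → ℝ} {s t : Set α}
    (hs : MeasurableSet s) (ht : MeasurableSet t)
    (hgs : IntegrableOn g s μ) (hgt : IntegrableOn g t μ)
    (hst : ∀ x ∈ s \ t, g x ≤ 0) (hts : ∀ x ∈ t \ s, 0 ≤ g x) :
    ∫ x in s, g x ∂μ ≤ ∫ x in t, g x ∂μ := by
  rw [← integral_inter_add_sdiff ht hgs, ← integral_inter_add_sdiff hs hgt, inter_comm]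
  have h_st := setIntegral_nonpos (μ := μ) (hs.diff ht) hst
  have h_ts := setIntegral_nonneg (μ := μ) (ht.diff hs) hts
  linarith

theorem intervalIntegral_le_of_superlevel_window {f : ℝ → ℝ} {a b a' b' c : ℝ}
    (hf : IntervalIntegrable f volume a b) (hf' : IntervalIntegrable f volume a' b')
    (hab : a ≤ b) (hlen : b - a = b' - a')
    (hin : ∀ x ∈ Ioc a' b', c ≤ f x) (hout : ∀ x ∉ Ioc a' b', f x ≤ c) :
    ∫ x in a..b, f x ≤ ∫ x in a'..b', f x := by
  have ha'b' : a' ≤ b' := by linarith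
  have key : ∫ x in Ioc a b, (f x - c) ≤ ∫ x in Ioc a' b', (f x - c) :=
    setIntegral_le_setIntegral_of_nonpos_sdiff_of_nonneg_sdiff measurableSet_Ioc measurableSet_Ioc
      ((hf.sub intervalIntegrable_const).1) ((hf'.sub intervalIntegrable_const).1)
      (fun x hx => sub_nonpos.2 (hout x hx.2)) (fun x hx => sub_nonneg.2 (hin x hx.1))
  rw [← intervalIntegral.integral_of_le hab, ← intervalIntegral.integral_of_le ha'b',
    intervalIntegral.integral_sub hf intervalIntegrable_const,
    intervalIntegral.integral_sub hf' intervalIntegrable_const,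
    intervalIntegral.integral_const, intervalIntegral.integral_const, hlen] at key
  linarith

theorem measurable_examplePdf : Measurable examplePdf :=
  Measurable.ite (measurableSet_Ici.inter measurableSet_Iio) (by fun_prop) <|
    Measurable.ite (measurableSet_Ici.inter measurableSet_Iic) (by fun_prop) measurable_const

theorem abs_examplePdf_le_one (x : ℝ) : |examplePdf x| ≤ 1 := by
  unfold examplePdf
  split_ifs with h₁ h₂
  · rw [abs_le]; constructor <;> linarith [h₁.1, h₁.2]
  · rw [abs_le]; constructor <;> linarith [h₂.1, h₂.2]
  · simp

theorem intervalIntegrable_examplePdf (a b : ℝ) : IntervalIntegrable examplePdf volume a b :=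
  (intervalIntegrable_const (c := (1 : ℝ))).mono_fun' measurable_examplePdf.aestronglyMeasurable
    (ae_of_all _ abs_examplePdf_le_one)

theorem examplePdf_ge_of_mem_Ioc {d x : ℝ} (hd : d ≤ 3/2) (hx : x ∈ Ioc (-(d/3)) (2*d/3)) :
    4/5 * (1 - d/3) ≤ examplePdf x := by
  obtain ⟨hx₁, hx₂⟩ := hx
  unfold examplePdf
  split_ifs with h₁ h₂
  · linarith
  · linarith
  · rcases lt_or_ge x 0 with h | h
    · exact absurd ⟨by linarith, h⟩ h₁
    · exact absurd ⟨h, by linarith⟩ h₂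

theorem examplePdf_le_of_notMem_Ioc {d x : ℝ} (hd₀ : 0 ≤ d) (hd : d ≤ 3)
    (hx : x ∉ Ioc (-(d/3)) (2*d/3)) :
    examplePdf x ≤ 4/5 * (1 - d/3) := by
  rw [mem_Ioc, not_and_or, not_lt, not_le] at hx
  unfold examplePdf
  split_ifs with h₁ h₂
  · rcases hx with hx | hx <;> linarith [h₁.2]
  · rcases hx with hx | hx <;> linarith [h₂.1]
  · linarith

/-- For the asymmetric unimodal example density, for every window length
`0 < d ≤ 3/2` the point `xhat = d/6` maximizes the captured probability
`∫_{xhat - d/2}^{xhat + d/2} f(x) dx` over all candidate estimates `xhat ∈ ℝ`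
(i.e. the MP(d) estimate is `d/6`); in particular the MP(d) estimate `d/6`
tends to the MAP estimate `0` as `d → 0⁺`. -/
theorem example_mpd_estimate :
    (∀ d : ℝ, 0 < d → d ≤ 3/2 → ∀ xhat : ℝ,
      (∫ x in (xhat - d/2)..(xhat + d/2), examplePdf x)
        ≤ ∫ x in (d/6 - d/2)..(d/6 + d/2), examplePdf x) ∧
    Tendsto (fun d : ℝ => d/6) (nhdsWithin 0 (Ioi 0)) (nhds 0) := by
  refine ⟨fun d hd hd' xhat => ?_, tendsto_nhdsWithin_of_tendsto_nhds ?_⟩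
  · rw [show d/6 - d/2 = -(d/3) by ring, show d/6 + d/2 = 2*d/3 by ring]
    exact intervalIntegral_le_of_superlevel_window (intervalIntegrable_examplePdf _ _)
      (intervalIntegrable_examplePdf _ _) (by linarith) (by ring)
      (fun _ => examplePdf_ge_of_mem_Ioc hd')
      (fun _ => examplePdf_le_of_notMem_Ioc hd.le (by linarith))
  · simpa using (continuous_id.div_const (6 : ℝ)).tendsto 0
end
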